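/- arXiv:2104.12892 — 2 statements merged into one kernel-verified Lean document; each statement's English description precedes it below -/
import Mathlib

section
/- Let Ω ⊂ ℝ^n be a bounded open set, 1 < p < ∞, and let f : Ω×ℝ^m → ℝ be Borel measurable, with f(x,·) convex for a.e. x ∈ Ω and c_0|η|^p ≤ f(x,η) ≤ c_1|η|^p + a(x) for a.e. x and all η, where 0 < c_0 ≤ c_1 and a ∈ L^∞(Ω) is nonnegative. Then for every r > 0 there exist R = R(r) > r and a Borel measurable function g_r : Ω×ℝ^m → ℝ such that g_r(x,·) is convex for a.e. x ∈ Ω and: (1) 0 ≤ g_r(x,η) ≤ f(x,η) for a.e. x ∈ Ω and every η ∈ ℝ^m; (2) g_r(x,η) = f(x,η) for a.e. x ∈ Ω and every η with |η| ≤ r; (3) g_r(x,η) ≤ c_0|η|^p for a.e. x ∈ Ω and every η with |η| > R. -/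
open MeasureTheory Filter Topology
open scoped ENNReal

noncomputable section

abbrev Pt (n : ℕ) := EuclideanSpace ℝ (Fin n)
abbrev Vec (m : ℕ) := EuclideanSpace ℝ (Fin m)

variable {n m : ℕ}

def LocLipCoeff (c : Fin m → Fin n → Pt n → ℝ) : Prop :=
  ∀ j i, LocallyLipschitz (c j i)

def XT (c : Fin m → Fin n → Pt n → ℝ) (j : Fin m) (ψ : Pt n → ℝ) (x : Pt n) : ℝ :=
  -∑ i, fderiv ℝ (fun y => c j i y * ψ y) x (EuclideanSpace.single i 1)

def IsTest (Ω : Set (Pt n)) (ψ : Pt n → ℝ) : Prop :=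
  ContDiff ℝ (⊤ : ℕ∞) ψ ∧ HasCompactSupport ψ ∧ tsupport ψ ⊆ Ω

def IsXGrad (c : Fin m → Fin n → Pt n → ℝ) (Ω : Set (Pt n))
    (u : Pt n → ℝ) (U : Pt n → Vec m) : Prop :=
  ∀ ψ, IsTest Ω ψ → ∀ j,
    ∫ x in Ω, u x * XT c j ψ x = ∫ x in Ω, U x j * ψ x

def XGradC1 (c : Fin m → Fin n → Pt n → ℝ) (φ : Pt n → ℝ) (x : Pt n) : Vec m :=
  WithLp.toLp 2 fun j => ∑ i, c j i x * fderiv ℝ φ x (EuclideanSpace.single i 1)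

def MemW1pX (c : Fin m → Fin n → Pt n → ℝ) (Ω : Set (Pt n)) (p : ℝ)
    (u : Pt n → ℝ) (U : Pt n → Vec m) : Prop :=
  MemLp u (ENNReal.ofReal p) (volume.restrict Ω) ∧
  MemLp U (ENNReal.ofReal p) (volume.restrict Ω) ∧
  IsXGrad c Ω u U

def TendstoLp {E : Type*} [NormedAddCommGroup E] (p : ℝ) (μ : Measure (Pt n))
    (uh : ℕ → Pt n → E) (u : Pt n → E) : Prop :=
  Tendsto (fun h => eLpNorm (fun x => uh h x - u x) (ENNReal.ofReal p) μ) atTop (nhds 0)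

def MemW1pX0 (c : Fin m → Fin n → Pt n → ℝ) (Ω : Set (Pt n)) (p : ℝ)
    (u : Pt n → ℝ) (U : Pt n → Vec m) : Prop :=
  MemW1pX c Ω p u U ∧
  ∃ φ : ℕ → Pt n → ℝ,
    (∀ k, ContDiff ℝ 1 (φ k) ∧ HasCompactSupport (φ k) ∧ tsupport (φ k) ⊆ Ω) ∧
    TendstoLp p (volume.restrict Ω) φ u ∧
    TendstoLp p (volume.restrict Ω) (fun k => XGradC1 c (φ k)) U

def MemI (Ω : Set (Pt n)) (p c0 c1 : ℝ) (a0 a1 : Pt n → ℝ)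
    (f : Pt n → Vec m → ℝ) : Prop :=
  Measurable (Function.uncurry f) ∧
  (∀ᵐ x ∂(volume.restrict Ω), ConvexOn ℝ Set.univ (f x)) ∧
  (∀ᵐ x ∂(volume.restrict Ω), ∀ η : Vec m,
    c0 * ‖η‖ ^ p - a0 x ≤ f x η ∧ f x η ≤ c1 * ‖η‖ ^ p + a1 x)

def LIC (c : Fin m → Fin n → Pt n → ℝ) (Ω : Set (Pt n)) : Prop :=
  ∃ N : Set (Pt n), N ⊆ Ω ∧ (∃ C : Set (Pt n), IsClosed C ∧ N = Ω ∩ C) ∧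
    volume N = 0 ∧
    ∀ x ∈ Ω \ N, LinearIndependent ℝ (fun j : Fin m => fun i : Fin n => c j i x)

def PoincareIneq (c : Fin m → Fin n → Pt n → ℝ) (Ω : Set (Pt n)) (p cp : ℝ) : Prop :=
  ∀ u U, MemW1pX0 c Ω p u U →
    cp * ∫ x in Ω, |u x| ^ p ≤ ∫ x in Ω, ‖U x‖ ^ p

def CompactEmbW0 (c : Fin m → Fin n → Pt n → ℝ) (Ω : Set (Pt n)) (p : ℝ) : Prop :=
  ∀ (u : ℕ → Pt n → ℝ) (U : ℕ → Pt n → Vec m) (M : ℝ),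
    (∀ h, MemW1pX0 c Ω p (u h) (U h)) →
    (∀ h, (∫ x in Ω, |u h x| ^ p) + (∫ x in Ω, ‖U h x‖ ^ p) ≤ M) →
    ∃ (φ : ℕ → ℕ) (v : Pt n → ℝ), StrictMono φ ∧
      MemLp v (ENNReal.ofReal p) (volume.restrict Ω) ∧
      TendstoLp p (volume.restrict Ω) (fun k => u (φ k)) v

def XInt (c : Fin m → Fin n → Pt n → ℝ) (A : Set (Pt n)) (p : ℝ)
    (f : Pt n → Vec m → ℝ) (u : Pt n → ℝ) : EReal :=
  sInf {y : EReal | ∃ U, MemW1pX c A p u U ∧ y = ((∫ x in A, f x (U x) : ℝ) : EReal)}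

def XIntShift (c : Fin m → Fin n → Pt n → ℝ) (A : Set (Pt n)) (p : ℝ)
    (f : Pt n → Vec m → ℝ) (Φ : Pt n → Vec m) (u : Pt n → ℝ) : EReal :=
  sInf {y : EReal | ∃ U, MemW1pX c A p u U ∧
    y = ((∫ x in A, f x (U x + Φ x) : ℝ) : EReal)}

def indWphi (c : Fin m → Fin n → Pt n → ℝ) (Ω : Set (Pt n)) (p : ℝ)
    (φ : Pt n → ℝ) (u : Pt n → ℝ) : EReal :=
  letI := Classical.propDecidable
  if ∃ W, MemW1pX0 c Ω p (fun x => u x - φ x) W then (0 : EReal) else ⊤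

def GammaConvLp (Ω : Set (Pt n)) (p : ℝ)
    (Fh : ℕ → (Pt n → ℝ) → EReal) (F : (Pt n → ℝ) → EReal) : Prop :=
  ∀ u : Pt n → ℝ, MemLp u (ENNReal.ofReal p) (volume.restrict Ω) →
    (∀ uh : ℕ → Pt n → ℝ,
        (∀ h, MemLp (uh h) (ENNReal.ofReal p) (volume.restrict Ω)) →
        TendstoLp p (volume.restrict Ω) uh u →
        F u ≤ liminf (fun h => Fh h (uh h)) atTop) ∧
    (∃ uh : ℕ → Pt n → ℝ,
        (∀ h, MemLp (uh h) (ENNReal.ofReal p) (volume.restrict Ω)) ∧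
        TendstoLp p (volume.restrict Ω) uh u ∧
        limsup (fun h => Fh h (uh h)) atTop ≤ F u)

def WeakLpR (Ω : Set (Pt n)) (q : ℝ) (uh : ℕ → Pt n → ℝ) (u : Pt n → ℝ) : Prop :=
  ∀ ψ : Pt n → ℝ, MemLp ψ (ENNReal.ofReal q) (volume.restrict Ω) →
    Tendsto (fun h => ∫ x in Ω, ψ x * uh h x) atTop (nhds (∫ x in Ω, ψ x * u x))

def WeakLpV (Ω : Set (Pt n)) (q : ℝ) (Φh : ℕ → Pt n → Vec m) (Φ : Pt n → Vec m) : Prop :=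
  ∀ Ψ : Pt n → Vec m, MemLp Ψ (ENNReal.ofReal q) (volume.restrict Ω) →
    Tendsto (fun h => ∫ x in Ω, (inner ℝ (Ψ x) (Φh h x) : ℝ)) atTop
      (nhds (∫ x in Ω, (inner ℝ (Ψ x) (Φ x) : ℝ)))

def Caratheodory (Ω : Set (Pt n)) (g : Pt n → ℝ → ℝ) : Prop :=
  (∀ s : ℝ, Measurable fun x => g x s) ∧
  (∀ᵐ x ∂(volume.restrict Ω), Continuous (g x))

def GrowthG (Ω : Set (Pt n)) (p d0 d1 : ℝ) (b0 b1 : Pt n → ℝ) (g : Pt n → ℝ → ℝ) : Prop :=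
  ∀ᵐ x ∂(volume.restrict Ω), ∀ s : ℝ,
    d0 * |s| ^ p - b0 x ≤ g x s ∧ g x s ≤ d1 * |s| ^ p + b1 x

/-- The functional `Ξ^φ = F + G + 𝟙_φ` on `L^p(Ω)`. -/
def Xi (c : Fin m → Fin n → Pt n → ℝ) (Ω : Set (Pt n)) (p : ℝ)
    (f : Pt n → Vec m → ℝ) (g : Pt n → ℝ → ℝ) (φb : Pt n → ℝ)
    (u : Pt n → ℝ) : EReal :=
  XInt c Ω p f u + ((∫ x in Ω, g x (u x) : ℝ) : EReal) + indWphi c Ω p φb u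

/-- `u` minimizes the functional `F` over `L^p(Ω)`. -/
def MinimizesLp (Ω : Set (Pt n)) (p : ℝ) (F : (Pt n → ℝ) → EReal) (u : Pt n → ℝ) : Prop :=
  MemLp u (ENNReal.ofReal p) (volume.restrict Ω) ∧
  ∀ v, MemLp v (ENNReal.ofReal p) (volume.restrict Ω) → F u ≤ F v

/-- The infimum of the functional `F` over `L^p(Ω)`. -/
def infLp (Ω : Set (Pt n)) (p : ℝ) (F : (Pt n → ℝ) → EReal) : EReal :=
  sInf {y : EReal | ∃ u, MemLp u (ENNReal.ofReal p) (volume.restrict Ω) ∧ y = F u}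

/-- The functional `Ψ^φ(u) = ∫_Ω |Xu|^p` if `u ∈ W^{1,p}_{X,φ}(Ω)`, `∞` otherwise. -/
def PsiPhi (c : Fin m → Fin n → Pt n → ℝ) (Ω : Set (Pt n)) (p : ℝ)
    (φ : Pt n → ℝ) (Φ : Pt n → Vec m) (u : Pt n → ℝ) : ℝ≥0∞ :=
  sInf {y : ℝ≥0∞ | ∃ W, MemW1pX0 c Ω p (fun x => u x - φ x) W ∧
    y = ENNReal.ofReal (∫ x in Ω, ‖Φ x + W x‖ ^ p)}

/-- The quadratic form `⟨Aξ, ζ⟩`. -/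
def aQuad (A : Matrix (Fin m) (Fin m) ℝ) (ξ ζ : Vec m) : ℝ :=
  ∑ i, ∑ j, A i j * ξ j * ζ i

/-- `x ↦ A(x) U(x)` as a `Vec m`-valued function. -/
def aMulVec (A : Pt n → Matrix (Fin m) (Fin m) ℝ) (U : Pt n → Vec m) : Pt n → Vec m :=
  fun x => WithLp.toLp 2 fun i => ∑ j, A x i j * U x j

/-- Weak solution of `μ u + div_X(a(x) X u) = g` with zero boundary values. -/
def IsWeakSol (c : Fin m → Fin n → Pt n → ℝ) (Ω : Set (Pt n))
    (A : Pt n → Matrix (Fin m) (Fin m) ℝ) (μ : ℝ) (g : Pt n → ℝ)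
    (u : Pt n → ℝ) (U : Pt n → Vec m) : Prop :=
  MemW1pX0 c Ω 2 u U ∧
  ∀ v V, MemW1pX0 c Ω 2 v V →
    μ * (∫ x in Ω, u x * v x) + (∫ x in Ω, aQuad (A x) (U x) (V x)) =
      ∫ x in Ω, g x * v x

/-- The Heisenberg group law on `ℝ^{2s+1}`. -/
def Hmul (s : ℕ) (x y : Pt (2*s+1)) : Pt (2*s+1) :=
  WithLp.toLp 2 fun i =>
    if (i : ℕ) < 2*s then x i + y i
    else x i + y i + (1/2) * ∑ k : Fin s,
      (x ⟨(k : ℕ), by have := k.isLt; omega⟩ * y ⟨s + (k : ℕ), by have := k.isLt; omega⟩ -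
       y ⟨(k : ℕ), by have := k.isLt; omega⟩ * x ⟨s + (k : ℕ), by have := k.isLt; omega⟩)

/-- The intrinsic dilations of the Heisenberg group. -/
def Hdil (s : ℕ) (lam : ℝ) (x : Pt (2*s+1)) : Pt (2*s+1) :=
  WithLp.toLp 2 fun i => if (i : ℕ) < 2*s then lam * x i else lam^2 * x i

/-- `H`-periodicity: `g(2k ⬝ x) = g(x)` for all `k ∈ ℤ^n`. -/
def HPeriodic (s : ℕ) (g : Pt (2*s+1) → ℝ) : Prop :=
  ∀ (x : Pt (2*s+1)) (k : Fin (2*s+1) → ℤ),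
    g (Hmul s (WithLp.toLp 2 fun i => 2 * (k i : ℝ)) x) = g x

/-- The coefficients of the horizontal gradient of the Heisenberg group `ℍ^s`. -/
def Hcoeff (s : ℕ) : Fin (2*s) → Fin (2*s+1) → Pt (2*s+1) → ℝ :=
  fun j i x =>
    if (i : ℕ) = (j : ℕ) then 1
    else if (i : ℕ) = 2*s then
      (if hj : (j : ℕ) < s then -(x ⟨s + (j : ℕ), by omega⟩) / 2
       else x ⟨(j : ℕ) - s, by have := j.isLt; omega⟩ / 2)
    else 0




private def partMin {α : Type*} (T : ℕ → α → ℝ) : ℕ → α → ℝ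
  | 0 => T 0
  | (N+1) => fun z => min (partMin T N z) (T (N+1) z)

lemma aux_measurable_iInf {α : Type*} [MeasurableSpace α] (T : ℕ → α → ℝ)
    (hT : ∀ k, Measurable (T k)) (h0 : ∀ k z, 0 ≤ T k z) :
    Measurable fun z => ⨅ k, T k z := by
  have hpm : ∀ N, Measurable (partMin T N) := by
    intro N; induction N with
    | zero => exact hT 0
    | succ N ih => exact ih.min (hT (N+1))
  have hp0 : ∀ N z, 0 ≤ partMin T N z := by
    intro N; induction N with
    | zero => exact h0 0
    | succ N ih => exact fun z => le_min (ih z) (h0 _ z)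
  have hpleT : ∀ N z, partMin T N z ≤ T N z := by
    intro N z; cases N with
    | zero => exact le_refl _
    | succ N => exact min_le_right _ _
  apply measurable_of_tendsto_metrizable hpm
  rw [tendsto_pi_nhds]; intro z
  have hbT : BddBelow (Set.range fun k => T k z) := ⟨0, by rintro _ ⟨k, rfl⟩; exact h0 k z⟩
  have hbP : BddBelow (Set.range fun N => partMin T N z) :=
    ⟨0, by rintro _ ⟨k, rfl⟩; exact hp0 k z⟩
  have hanti : Antitone (fun N => partMin T N z) :=
    antitone_nat_of_succ_le (fun N => min_le_left _ _)
  have h1 : Tendsto (fun N => partMin T N z) atTop (𝓝 (⨅ N, partMin T N z)) :=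
    tendsto_atTop_ciInf hanti hbP
  have heq : (⨅ N, partMin T N z) = ⨅ k, T k z := by
    apply le_antisymm
    · exact le_ciInf fun k => (ciInf_le hbP k).trans (hpleT k z)
    · refine le_ciInf fun N => ?_
      induction N with
      | zero => exact ciInf_le hbT 0
      | succ N ih => exact le_min ih (ciInf_le hbT (N+1))
  rwa [heq] at h1

lemma aux_infConv_convexOn {E : Type*} [NormedAddCommGroup E] [NormedSpace ℝ E]
    (F : E → ℝ) (hF : ConvexOn ℝ Set.univ F) (h0 : ∀ ξ, 0 ≤ F ξ) (L : ℝ) (hL : 0 ≤ L) :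
    ConvexOn ℝ Set.univ (fun η => ⨅ ξ, (F ξ + L * ‖η - ξ‖)) := by
  have hbb : ∀ η : E, BddBelow (Set.range fun ξ => F ξ + L * ‖η - ξ‖) := fun η =>
    ⟨0, by rintro _ ⟨ξ, rfl⟩; have := h0 ξ; positivity⟩
  refine ⟨convex_univ, ?_⟩
  intro η1 _ η2 _ a b ha hb hab
  rcases eq_or_lt_of_le ha with h | hapos
  · have hb1 : b = 1 := by linarith
    simp [← h, hb1]
  rcases eq_or_lt_of_le hb with h | hbpos
  · have ha1 : a = 1 := by linarith
    simp [← h, ha1]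
  refine le_of_forall_pos_le_add fun ε hε => ?_
  obtain ⟨ξ1, hξ1⟩ := exists_lt_of_ciInf_lt
    (show (⨅ ξ, (F ξ + L * ‖η1 - ξ‖)) < (⨅ ξ, (F ξ + L * ‖η1 - ξ‖)) + ε by linarith)
  obtain ⟨ξ2, hξ2⟩ := exists_lt_of_ciInf_lt
    (show (⨅ ξ, (F ξ + L * ‖η2 - ξ‖)) < (⨅ ξ, (F ξ + L * ‖η2 - ξ‖)) + ε by linarith)
  have hle : (⨅ ξ, (F ξ + L * ‖(a • η1 + b • η2) - ξ‖)) ≤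
      F (a • ξ1 + b • ξ2) + L * ‖(a • η1 + b • η2) - (a • ξ1 + b • ξ2)‖ := ciInf_le (hbb _) _
  have hid : (a • η1 + b • η2) - (a • ξ1 + b • ξ2) = a • (η1 - ξ1) + b • (η2 - ξ2) := by
    rw [smul_sub, smul_sub]; abel
  have hnorm : ‖(a • η1 + b • η2) - (a • ξ1 + b • ξ2)‖ ≤ a * ‖η1 - ξ1‖ + b * ‖η2 - ξ2‖ := by
    rw [hid]
    refine (norm_add_le _ _).trans ?_
    rw [norm_smul, norm_smul, Real.norm_of_nonneg ha, Real.norm_of_nonneg hb]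
  have hconv := hF.2 (Set.mem_univ ξ1) (Set.mem_univ ξ2) ha hb hab
  simp only [smul_eq_mul] at hconv ⊢
  have hLn := mul_le_mul_of_nonneg_left hnorm hL
  have t1 := mul_le_mul_of_nonneg_left hξ1.le ha
  have t2 := mul_le_mul_of_nonneg_left hξ2.le hb
  calc (⨅ ξ, (F ξ + L * ‖(a • η1 + b • η2) - ξ‖))
      ≤ F (a • ξ1 + b • ξ2) + L * ‖(a • η1 + b • η2) - (a • ξ1 + b • ξ2)‖ := hle
    _ ≤ (a * F ξ1 + b * F ξ2) + L * (a * ‖η1 - ξ1‖ + b * ‖η2 - ξ2‖) := add_le_add hconv hLn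
    _ = a * (F ξ1 + L * ‖η1 - ξ1‖) + b * (F ξ2 + L * ‖η2 - ξ2‖) := by ring
    _ ≤ a * ((⨅ ξ, (F ξ + L * ‖η1 - ξ‖)) + ε) + b * ((⨅ ξ, (F ξ + L * ‖η2 - ξ‖)) + ε) :=
        add_le_add t1 t2
    _ = a * (⨅ ξ, (F ξ + L * ‖η1 - ξ‖)) + b * (⨅ ξ, (F ξ + L * ‖η2 - ξ‖)) + ε := by
        linear_combination ε * hab

lemma aux_infConv_dense_eq {E : Type*} [NormedAddCommGroup E] (F : E → ℝ)
    (hFc : Continuous F) (h0 : ∀ ξ, 0 ≤ F ξ) (L : ℝ) (hL : 0 ≤ L)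
    (s : ℕ → E) (hs : DenseRange s) (η : E) :
    (⨅ k, max 0 (F (s k) + L * ‖η - s k‖)) = ⨅ ξ, (F ξ + L * ‖η - ξ‖) := by
  have hnn : ∀ ξ : E, 0 ≤ F ξ + L * ‖η - ξ‖ := fun ξ => by have := h0 ξ; positivity
  have hmax : ∀ k, max 0 (F (s k) + L * ‖η - s k‖) = F (s k) + L * ‖η - s k‖ :=
    fun k => max_eq_right (hnn _)
  rw [iInf_congr hmax]
  have hbbE : BddBelow (Set.range fun ξ => F ξ + L * ‖η - ξ‖) :=
    ⟨0, by rintro _ ⟨ξ, rfl⟩; exact hnn ξ⟩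
  have hbbs : BddBelow (Set.range fun k => F (s k) + L * ‖η - s k‖) :=
    ⟨0, by rintro _ ⟨k, rfl⟩; exact hnn _⟩
  apply le_antisymm
  · refine le_ciInf fun ξ => ?_
    refine le_of_forall_pos_le_add fun ε hε => ?_
    have hcF : Continuous fun ζ : E => F ζ + L * ‖η - ζ‖ :=
      hFc.add (continuous_const.mul ((continuous_const.sub continuous_id).norm))
    have hU : IsOpen {ζ : E | F ζ + L * ‖η - ζ‖ < F ξ + L * ‖η - ξ‖ + ε} :=
      isOpen_lt hcF continuous_const
    obtain ⟨k, hk⟩ := hs.exists_mem_open hU ⟨ξ, by simp only [Set.mem_setOf_eq]; linarith⟩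
    exact (ciInf_le hbbs k).trans hk.le
  · exact le_ciInf fun k => ciInf_le hbbE (s k)

lemma aux_convexOn_lip {E : Type*} [NormedAddCommGroup E] [NormedSpace ℝ E] (F : E → ℝ)
    (hF : ConvexOn ℝ Set.univ F) (h0 : ∀ ξ, 0 ≤ F ξ) (K r : ℝ) (hr : 0 < r)
    (hK : ∀ w, ‖w‖ ≤ 2 * r → F w ≤ K) (η ξ : E) (hη : ‖η‖ ≤ r) :
    F η ≤ F ξ + (K / r) * ‖η - ξ‖ := by
  have hK0 : 0 ≤ K := (h0 0).trans (hK 0 (by simp; linarith))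
  rcases eq_or_ne η ξ with rfl | hne
  · simp
  · set d := ‖η - ξ‖ with hd
    have hd0 : 0 < d := by rw [hd]; exact norm_sub_pos_iff.mpr hne
    set w := η + (r / d) • (η - ξ) with hw
    have hwn : ‖w‖ ≤ 2 * r := by
      calc ‖w‖ ≤ ‖η‖ + ‖(r / d) • (η - ξ)‖ := norm_add_le _ _
        _ = ‖η‖ + (r / d) * d := by
            rw [norm_smul, Real.norm_of_nonneg (by positivity)]
        _ ≤ r + r := by
            have : (r / d) * d = r := div_mul_cancel₀ r hd0.ne'
            linarith
        _ = 2 * r := by ring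
    have hdr : 0 < d + r := by linarith
    set α := d / (d + r) with hα'
    set β := r / (d + r) with hβ'
    have hα : 0 ≤ α := by positivity
    have hβ : 0 ≤ β := by positivity
    have hαβ : α + β = 1 := by rw [hα', hβ']; field_simp
    have hηid : α • w + β • ξ = η := by
      have hcoef : α * (r / d) = β := by
        rw [hα', hβ']; field_simp
      have h1 : α • w = α • η + β • (η - ξ) := by
        rw [hw, smul_add, smul_smul, hcoef]
      rw [h1, smul_sub]
      have : α • η + (β • η - β • ξ) + β • ξ = (α + β) • η := by
        rw [add_smul]; abel
      rw [this, hαβ, one_smul]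
    have hc := hF.2 (Set.mem_univ w) (Set.mem_univ ξ) hα hβ hαβ
    rw [hηid, smul_eq_mul, smul_eq_mul] at hc
    have h2 : α * F w ≤ α * K := mul_le_mul_of_nonneg_left (hK w hwn) hα
    have h3 : β * F ξ ≤ F ξ := by
      have hβ1 : β ≤ 1 := by rw [hβ', div_le_one hdr]; linarith
      nlinarith [h0 ξ]
    have h4 : α * K ≤ (K / r) * d := by
      rw [hα', div_mul_eq_mul_div, div_mul_eq_mul_div, div_le_div_iff₀ hdr hr]
      nlinarith [mul_nonneg (mul_nonneg hK0 hd0.le) hd0.le]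
    linarith


/-- Lemma 3.2: convex truncation of the integrand. -/
theorem statement_7
    {n m : ℕ} (Ω : Set (Pt n)) (hΩo : IsOpen Ω) (hΩb : Bornology.IsBounded Ω)
    (p : ℝ) (hp : 1 < p)
    (c0 c1 : ℝ) (h0 : 0 < c0) (h01 : c0 ≤ c1)
    (a : Pt n → ℝ) (ha : ∀ x, 0 ≤ a x)
    (haB : ∃ M : ℝ, ∀ᵐ x ∂(volume.restrict Ω), a x ≤ M)
    (f : Pt n → Vec m → ℝ) (hf : MemI Ω p c0 c1 (fun _ => 0) a f)
    (r : ℝ) (hr : 0 < r) :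
    ∃ R : ℝ, r < R ∧
    ∃ g : Pt n → Vec m → ℝ,
      Measurable (Function.uncurry g) ∧
      (∀ᵐ x ∂(volume.restrict Ω), ConvexOn ℝ Set.univ (g x)) ∧
      (∀ᵐ x ∂(volume.restrict Ω), ∀ η : Vec m, 0 ≤ g x η ∧ g x η ≤ f x η) ∧
      (∀ᵐ x ∂(volume.restrict Ω), ∀ η : Vec m, ‖η‖ ≤ r → g x η = f x η) ∧
      (∀ᵐ x ∂(volume.restrict Ω), ∀ η : Vec m, R < ‖η‖ → g x η ≤ c0 * ‖η‖ ^ p) := by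
  classical
  obtain ⟨hfmeas, hfconv, hfbnd⟩ := hf
  obtain ⟨M0, hM0⟩ := haB
  obtain ⟨M, hMdef⟩ : ∃ M : ℝ, M = max M0 0 := ⟨_, rfl⟩
  have hM0' : 0 ≤ M := hMdef ▸ le_max_right _ _
  have hMae : ∀ᵐ x ∂(volume.restrict Ω), a x ≤ M :=
    hM0.mono fun x h => h.trans (hMdef ▸ le_max_left _ _)
  have hc1 : 0 < c1 := lt_of_lt_of_le h0 h01
  have hp0 : 0 < p := by linarith
  obtain ⟨K, hKdef⟩ : ∃ K : ℝ, K = c1 * (2*r)^p + M := ⟨_, rfl⟩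
  have hK0 : 0 ≤ K := by
    have h2r : (0:ℝ) ≤ (2*r)^p := Real.rpow_nonneg (by linarith) p
    rw [hKdef]; nlinarith
  obtain ⟨L, hLdef⟩ : ∃ L : ℝ, L = K / r := ⟨_, rfl⟩
  have hL0 : 0 ≤ L := hLdef ▸ div_nonneg hK0 hr.le
  obtain ⟨R, hRdef⟩ : ∃ R : ℝ, R = max (r+1) (max 1 (((M + L)/c0) ^ (1/(p-1)))) := ⟨_, rfl⟩
  have hrR : r < R := lt_of_lt_of_le (by linarith) (hRdef ▸ le_max_left _ _)
  have hkey : ∀ t : ℝ, R < t → M + L*t ≤ c0 * t^p := by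
    intro t ht
    rw [hRdef] at ht
    have ht1 : 1 < t := lt_of_le_of_lt ((le_max_left 1 _).trans (le_max_right _ _)) ht
    have htB : ((M + L)/c0) ^ (1/(p-1)) ≤ t :=
      (((le_max_right 1 _).trans (le_max_right _ _)).trans ht.le)
    have hX0 : (0:ℝ) ≤ (M + L)/c0 := div_nonneg (by linarith) h0.le
    have h1 : (M + L)/c0 ≤ t ^ (p-1) := by
      have h2 := Real.rpow_le_rpow (Real.rpow_nonneg hX0 _) htB (by linarith : (0:ℝ) ≤ p - 1)
      rwa [← Real.rpow_mul hX0, one_div, inv_mul_cancel₀ (by linarith : p - 1 ≠ 0),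
        Real.rpow_one] at h2
    have h2 : M + L ≤ c0 * t ^ (p-1) := by
      rw [div_le_iff₀ h0] at h1; linarith
    have htp : t ^ p = t ^ (p-1) * t := by
      conv_lhs => rw [show p = (p-1)+1 by ring]
      rw [Real.rpow_add (by linarith : (0:ℝ) < t), Real.rpow_one]
    rw [htp]
    have htpm : (0:ℝ) ≤ t ^ (p-1) := Real.rpow_nonneg (by linarith) _
    nlinarith
  obtain ⟨u, hu⟩ := TopologicalSpace.exists_dense_seq (Vec m)
  obtain ⟨s, hsdef⟩ : ∃ s : ℕ → Vec m,
      s = fun k => Nat.rec (0 : Vec m) (fun j _ => u j) k := ⟨_, rfl⟩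
  have hs : DenseRange s := hu.mono (by rintro _ ⟨k, rfl⟩; exact ⟨k+1, by rw [hsdef]⟩)
  have hs0 : s 0 = 0 := by rw [hsdef]; rfl
  obtain ⟨g, hgdef⟩ : ∃ g : Pt n → Vec m → ℝ,
      g = fun x η => ⨅ k, max 0 (f x (s k) + L * ‖η - s k‖) := ⟨_, rfl⟩
  have hbnd0 : ∀ᵐ x ∂(volume.restrict Ω), ∀ η : Vec m,
      c0 * ‖η‖^p ≤ f x η ∧ f x η ≤ c1*‖η‖^p + a x :=
    hfbnd.mono (fun x h η => by simpa using h η)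
  have main : ∀ x, ConvexOn ℝ Set.univ (f x) →
      (∀ η : Vec m, c0 * ‖η‖^p ≤ f x η ∧ f x η ≤ c1*‖η‖^p + a x) → a x ≤ M →
      ConvexOn ℝ Set.univ (g x) ∧ (∀ η, 0 ≤ g x η ∧ g x η ≤ f x η) ∧
      (∀ η, ‖η‖ ≤ r → g x η = f x η) ∧ (∀ η, R < ‖η‖ → g x η ≤ c0 * ‖η‖^p) := by
    intro x hconv hbnd hMx
    have hnn : ∀ η, 0 ≤ f x η := fun η => le_trans (by positivity) (hbnd η).1
    have hcont : Continuous (f x) := continuousOn_univ.mp (hconv.continuousOn isOpen_univ)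
    have hub : ∀ w : Vec m, ‖w‖ ≤ 2*r → f x w ≤ K := by
      intro w hw
      have h1 : ‖w‖ ^ p ≤ (2*r)^p := Real.rpow_le_rpow (norm_nonneg w) hw hp0.le
      have h2 := (hbnd w).2
      rw [hKdef]; nlinarith
    have hgeq : ∀ η, g x η = ⨅ ξ, (f x ξ + L * ‖η - ξ‖) := fun η => by
      rw [hgdef]
      exact aux_infConv_dense_eq (f x) hcont hnn L hL0 s hs η
    have hbbfull : ∀ η : Vec m, BddBelow (Set.range fun ξ => f x ξ + L * ‖η - ξ‖) := fun η =>
      ⟨0, by rintro _ ⟨ξ, rfl⟩; have := hnn ξ; positivity⟩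
    have hgle : ∀ η, g x η ≤ f x η := by
      intro η
      rw [hgeq η]
      have h1 := ciInf_le (hbbfull η) η
      simpa using h1
    refine ⟨?_, ?_, ?_, ?_⟩
    · have h1 := aux_infConv_convexOn (f x) hconv hnn L hL0
      have hEq : (g x) = fun η => ⨅ ξ, (f x ξ + L * ‖η - ξ‖) := funext hgeq
      rw [hEq]; exact h1
    · refine fun η => ⟨?_, hgle η⟩
      rw [hgdef]
      exact le_ciInf fun k => le_max_left _ _
    · intro η hη
      refine le_antisymm (hgle η) ?_
      rw [hgdef]
      refine le_ciInf fun k => le_max_of_le_right ?_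
      rw [hLdef]
      exact aux_convexOn_lip (f x) hconv hnn K r hr hub η (s k) hη
    · intro η hη
      have h1 : g x η ≤ max 0 (f x (s 0) + L * ‖η - s 0‖) := by
        rw [hgdef]
        exact ciInf_le ⟨0, by rintro _ ⟨k, rfl⟩; exact le_max_left _ _⟩ 0
      rw [hs0, sub_zero] at h1
      have hf0 : f x 0 ≤ M := by
        have h2 := (hbnd 0).2
        rw [norm_zero, Real.zero_rpow hp0.ne', mul_zero, zero_add] at h2
        linarith
      have hkey' := hkey ‖η‖ hη
      have hRnn : (0:ℝ) ≤ c0 * ‖η‖^p := by positivity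
      refine h1.trans (max_le hRnn ?_)
      linarith
  refine ⟨R, hrR, g, ?_, ?_, ?_, ?_, ?_⟩
  · have hEq : Function.uncurry g =
        fun z : Pt n × Vec m => ⨅ k, max 0 (f z.1 (s k) + L * ‖z.2 - s k‖) := by
      rw [hgdef]; rfl
    rw [hEq]
    apply aux_measurable_iInf
    · intro k
      refine Measurable.max measurable_const (Measurable.add ?_ ?_)
      · exact hfmeas.comp (measurable_fst.prodMk measurable_const)
      · exact measurable_const.mul ((measurable_snd.sub measurable_const).norm)
    · intro k z; exact le_max_left _ _
  · filter_upwards [hfconv, hbnd0, hMae] with x h1 h2 h3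
    exact (main x h1 h2 h3).1
  · filter_upwards [hfconv, hbnd0, hMae] with x h1 h2 h3
    exact (main x h1 h2 h3).2.1
  · filter_upwards [hfconv, hbnd0, hMae] with x h1 h2 h3
    exact (main x h1 h2 h3).2.2.1
  · filter_upwards [hfconv, hbnd0, hMae] with x h1 h2 h3
    exact (main x h1 h2 h3).2.2.2


end
end

section
/- Let 1 < p < ∞, let X satisfy (LIC), let f_h, f ∈ I_{m,p}(Ω,c_0,c_1,a_0,a_1) and let F_h, F : W^{1,p}_X(Ω) → ℝ be defined by F_h(u) = ∫_Ω f_h(x,Xu)dx and F(u) = ∫_Ω f(x,Xu)dx. Then (F_h) converges pointwise to F on W^{1,p}_X(Ω) if and only if (F_h) Γ-converges to F in the strong (norm) topology of W^{1,p}_X(Ω), i.e. for every u ∈ W^{1,p}_X(Ω): F(u) ≤ liminf_h F_h(u_h) for every sequence u_h → u in the W^{1,p}_X(Ω)-norm, and there exists a sequence u_h → u in the W^{1,p}_X(Ω)-norm with limsup_h F_h(u_h) ≤ F(u). -/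
open MeasureTheory Filter Topology
open scoped ENNReal

noncomputable section

variable {n m : ℕ}

lemma aux_two_rpow {a b p : ℝ} (ha : 0 ≤ a) (hb : 0 ≤ b) (hp : 0 ≤ p) :
    (a + b) ^ p ≤ 2 ^ p * (a ^ p + b ^ p) := by
  have h1 : a + b ≤ 2 * max a b := by
    rcases le_total a b with h | h
    · rw [max_eq_right h]; linarith
    · rw [max_eq_left h]; linarith
  have h2 : (a + b) ^ p ≤ (2 * max a b) ^ p :=
    Real.rpow_le_rpow (by linarith) h1 hp
  have h3 : (2 * max a b) ^ p = 2 ^ p * (max a b) ^ p :=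
    Real.mul_rpow (by norm_num) (le_max_of_le_left ha)
  have h4 : (max a b) ^ p ≤ a ^ p + b ^ p := by
    rcases le_total a b with h | h
    · rw [max_eq_right h]
      have := Real.rpow_nonneg ha p; linarith
    · rw [max_eq_left h]
      have := Real.rpow_nonneg hb p; linarith
  calc (a + b) ^ p ≤ 2 ^ p * (max a b) ^ p := by rw [← h3]; exact h2
    _ ≤ 2 ^ p * (a ^ p + b ^ p) := by
        have : (0:ℝ) ≤ 2 ^ p := Real.rpow_nonneg (by norm_num) p
        nlinarith [h4]

lemma aux_convex_sub_le {g : Vec m → ℝ} (hg : ConvexOn ℝ Set.univ g)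
    {p c1 A0 A1 : ℝ} (hp : 0 ≤ p) (hc1 : 0 ≤ c1)
    (hub : ∀ ξ, g ξ ≤ c1 * ‖ξ‖ ^ p + A1) (hlb : ∀ ξ, -A0 ≤ g ξ)
    (η ζ : Vec m) :
    g ζ - g η ≤ ‖ζ - η‖ * (c1 * (‖η‖ + ‖ζ‖ + 1) ^ p + A0 + A1) := by
  have hC0' : ∀ ζ' : Vec m, (0:ℝ) ≤ c1 * (‖η‖ + ‖ζ'‖ + 1) ^ p + A0 + A1 := by
    intro ζ'
    have h2 := hlb η
    have h3 := hub η
    have h5 : c1 * ‖η‖ ^ p ≤ c1 * (‖η‖ + ‖ζ'‖ + 1) ^ p :=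
      mul_le_mul_of_nonneg_left
        (Real.rpow_le_rpow (norm_nonneg _) (by linarith [norm_nonneg ζ']) hp) hc1
    linarith
  have hC0 : (0:ℝ) ≤ c1 * (‖η‖ + ‖ζ‖ + 1) ^ p + A0 + A1 := hC0' ζ
  set d : ℝ := ‖ζ - η‖ with hd
  have hd0 : 0 ≤ d := norm_nonneg _
  rcases eq_or_lt_of_le hd0 with h | hdpos
  · have : ζ = η := by
      have : ζ - η = 0 := by rw [← norm_eq_zero, ← hd]; exact h.symm
      linear_combination (norm := module) this
    rw [this, ← h, zero_mul, sub_self]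
  · set ξ : Vec m := ζ + d⁻¹ • (ζ - η) with hξ
    set t : ℝ := d / (d + 1) with ht
    have hd1 : (0:ℝ) < d + 1 := by linarith
    have ht0 : 0 ≤ t := div_nonneg hd0 hd1.le
    have ht1 : t ≤ 1 := by
      rw [ht, div_le_one hd1]; linarith
    have hkey : (1 - t) • η + t • ξ = ζ := by
      rw [hξ, ht]
      match_scalars <;> (field_simp; try ring)
    have hcx := hg.2 (Set.mem_univ η) (Set.mem_univ ξ)
      (by linarith : (0:ℝ) ≤ 1 - t) ht0 (by ring)
    rw [hkey] at hcx
    simp only [smul_eq_mul] at hcx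
    have hstep : g ζ - g η ≤ t * (g ξ - g η) := by nlinarith [hcx]
    have hξnorm : ‖ξ‖ ≤ ‖η‖ + ‖ζ‖ + 1 := by
      have h1 : ‖ξ‖ ≤ ‖ζ‖ + ‖d⁻¹ • (ζ - η)‖ := norm_add_le _ _
      have h2 : ‖d⁻¹ • (ζ - η)‖ = |d⁻¹| * d := by rw [norm_smul, Real.norm_eq_abs, ← hd]
      have h3 : |d⁻¹| * d = 1 := by
        rw [abs_of_nonneg (inv_nonneg.2 hd0), inv_mul_cancel₀ hdpos.ne']
      have := norm_nonneg η
      rw [h2, h3] at h1; linarith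
    have hgb : g ξ - g η ≤ c1 * (‖η‖ + ‖ζ‖ + 1) ^ p + A0 + A1 := by
      have h1 := hub ξ
      have h2 := hlb η
      have h3 : ‖ξ‖ ^ p ≤ (‖η‖ + ‖ζ‖ + 1) ^ p :=
        Real.rpow_le_rpow (norm_nonneg _) hξnorm hp
      nlinarith
    have htd : t ≤ d := by
      rw [ht, div_le_iff₀ hd1]; nlinarith
    calc g ζ - g η ≤ t * (g ξ - g η) := hstep
      _ ≤ t * (c1 * (‖η‖ + ‖ζ‖ + 1) ^ p + A0 + A1) :=
          mul_le_mul_of_nonneg_left hgb ht0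
      _ ≤ d * (c1 * (‖η‖ + ‖ζ‖ + 1) ^ p + A0 + A1) :=
          mul_le_mul_of_nonneg_right htd hC0

lemma aux_convex_abs_sub {g : Vec m → ℝ} (hg : ConvexOn ℝ Set.univ g)
    {p c1 A0 A1 : ℝ} (hp : 0 ≤ p) (hc1 : 0 ≤ c1)
    (hub : ∀ ξ, g ξ ≤ c1 * ‖ξ‖ ^ p + A1) (hlb : ∀ ξ, -A0 ≤ g ξ)
    (η ζ : Vec m) :
    |g ζ - g η| ≤ ‖ζ - η‖ * (c1 * (‖η‖ + ‖ζ‖ + 1) ^ p + A0 + A1) := by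
  rw [abs_sub_le_iff]
  constructor
  · exact aux_convex_sub_le hg hp hc1 hub hlb η ζ
  · have := aux_convex_sub_le hg hp hc1 hub hlb ζ η
    rwa [norm_sub_rev, add_comm ‖ζ‖] at this

lemma aux_eLpNorm_one_mul_rpow {μ : Measure (Pt n)} (W : Pt n → Vec m) {c p : ℝ}
    (hc : 0 ≤ c) (hp : 0 < p) :
    eLpNorm (fun x => c * ‖W x‖ ^ p) 1 μ
      = ENNReal.ofReal c * (eLpNorm W (ENNReal.ofReal p) μ) ^ p := by
  have hq0 : ENNReal.ofReal p ≠ 0 := by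
    simp [ENNReal.ofReal_eq_zero, not_le, hp]
  have hqt : ENNReal.ofReal p ≠ ∞ := ENNReal.ofReal_ne_top
  have hqr : (ENNReal.ofReal p).toReal = p := ENNReal.toReal_ofReal hp.le
  rw [eLpNorm_one_eq_lintegral_enorm]
  have h1 : ∀ x, ‖c * ‖W x‖ ^ p‖ₑ
      = ENNReal.ofReal c * ‖W x‖ₑ ^ p := by
    intro x
    rw [← ofReal_norm, Real.norm_eq_abs,
      abs_of_nonneg (by positivity), ENNReal.ofReal_mul hc,
      ← ENNReal.ofReal_rpow_of_nonneg (norm_nonneg _) hp.le,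
      ofReal_norm]
  simp_rw [h1]
  rw [lintegral_const_mul' _ _ ENNReal.ofReal_ne_top]
  congr 1
  rw [eLpNorm_eq_lintegral_rpow_enorm_toReal hq0 hqt, hqr, ← ENNReal.rpow_mul,
    one_div, inv_mul_cancel₀ hp.ne', ENNReal.rpow_one]

lemma aux_integrable_comp {μ : Measure (Pt n)} {f : Pt n → Vec m → ℝ}
    {W : Pt n → Vec m} {p c0 c1 : ℝ} {a0 a1 : Pt n → ℝ}
    (hp : 0 < p) (hc1 : 0 ≤ c1)
    (ha0 : ∀ x, 0 ≤ a0 x) (ha1 : ∀ x, 0 ≤ a1 x)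
    (ha0I : Integrable a0 μ) (ha1I : Integrable a1 μ)
    (hfm : Measurable (Function.uncurry f))
    (hgrow : ∀ᵐ x ∂μ, ∀ η : Vec m,
      c0 * ‖η‖ ^ p - a0 x ≤ f x η ∧ f x η ≤ c1 * ‖η‖ ^ p + a1 x)
    (hc0 : 0 ≤ c0)
    (hW : MemLp W (ENNReal.ofReal p) μ) :
    Integrable (fun x => f x (W x)) μ := by
  have hq0 : ENNReal.ofReal p ≠ 0 := by
    simp [ENNReal.ofReal_eq_zero, not_le, hp]
  have hqt : ENNReal.ofReal p ≠ ∞ := ENNReal.ofReal_ne_top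
  have hqr : (ENNReal.ofReal p).toReal = p := ENNReal.toReal_ofReal hp.le
  have hmeas : AEStronglyMeasurable (fun x => f x (W x)) μ := by
    have : AEMeasurable (fun x => Function.uncurry f (x, W x)) μ :=
      hfm.comp_aemeasurable (aemeasurable_id.prodMk hW.aestronglyMeasurable.aemeasurable)
    exact this.aestronglyMeasurable
  have hWp : Integrable (fun x => ‖W x‖ ^ p) μ := by
    have := hW.integrable_norm_rpow hq0 hqt
    rwa [hqr] at this
  refine Integrable.mono' ((hWp.const_mul c1).add (ha0I.add ha1I)) hmeas ?_
  filter_upwards [hgrow] with x hx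
  rcases hx (W x) with ⟨hl, hu⟩
  rw [Real.norm_eq_abs, abs_le]
  have h1 : (0:ℝ) ≤ c0 * ‖W x‖ ^ p :=
    mul_nonneg hc0 (Real.rpow_nonneg (norm_nonneg _) p)
  have h2 : (0:ℝ) ≤ c1 * ‖W x‖ ^ p :=
    mul_nonneg hc1 (Real.rpow_nonneg (norm_nonneg _) p)
  constructor <;> [skip; skip] <;>
    simp only [neg_add, neg_le, Pi.add_apply] <;>
    nlinarith [ha0 x, ha1 x]


lemma aux_key {n m : ℕ} {Ω : Set (Pt n)} (hΩb : Bornology.IsBounded Ω)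
    {p c0 c1 : ℝ} (hp : 1 < p) (h0 : 0 < c0)
    {a0 a1 : Pt n → ℝ} (ha0 : ∀ x, 0 ≤ a0 x) (ha1 : ∀ x, 0 ≤ a1 x)
    (ha0I : IntegrableOn a0 Ω) (ha1I : IntegrableOn a1 Ω)
    {g : ℕ → Pt n → Vec m → ℝ} (hc1 : 0 ≤ c1)
    (hg : ∀ h, MemI Ω p c0 c1 a0 a1 (g h))
    {V : Pt n → Vec m} {Vh : ℕ → Pt n → Vec m}
    (hV : MemLp V (ENNReal.ofReal p) (volume.restrict Ω))
    (hVh : ∀ h, MemLp (Vh h) (ENNReal.ofReal p) (volume.restrict Ω))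
    (hconv : Tendsto (fun h => eLpNorm (fun x => Vh h x - V x) (ENNReal.ofReal p)
        (volume.restrict Ω)) atTop (𝓝 0)) :
    Tendsto (fun h => (∫ x in Ω, g h x (Vh h x)) - ∫ x in Ω, g h x (V x)) atTop (𝓝 0) := by
  set μ := volume.restrict Ω with hμ
  haveI : IsFiniteMeasure μ := ⟨by
    rw [hμ, Measure.restrict_apply_univ]; exact hΩb.measure_lt_top⟩
  have hp0 : (0:ℝ) < p := lt_trans one_pos hp
  have hq0 : ENNReal.ofReal p ≠ 0 := by simp [ENNReal.ofReal_eq_zero, not_le, hp0]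
  have hqt : ENNReal.ofReal p ≠ ∞ := ENNReal.ofReal_ne_top
  have hqr : (ENNReal.ofReal p).toReal = p := ENNReal.toReal_ofReal hp0.le
  have hI1 : ∀ h, Integrable (fun x => g h x (Vh h x)) μ := fun h =>
    aux_integrable_comp hp0 hc1 ha0 ha1 ha0I ha1I (hg h).1 (hg h).2.2 h0.le (hVh h)
  have hI2 : ∀ h, Integrable (fun x => g h x (V x)) μ := fun h =>
    aux_integrable_comp hp0 hc1 ha0 ha1 ha0I ha1I (hg h).1 (hg h).2.2 h0.le hV
  set D : ℕ → Pt n → ℝ := fun h x => g h x (Vh h x) - g h x (V x) with hD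
  have heq : (fun h => (∫ x in Ω, g h x (Vh h x)) - ∫ x in Ω, g h x (V x))
      = fun h => ∫ x, D h x ∂μ := by
    funext h
    exact (integral_sub (hI1 h) (hI2 h)).symm
  rw [heq]
  have hnice : ∀ᵐ x ∂μ, ∀ h, ConvexOn ℝ Set.univ (g h x) ∧
      ∀ η : Vec m, c0 * ‖η‖ ^ p - a0 x ≤ g h x η ∧ g h x η ≤ c1 * ‖η‖ ^ p + a1 x := by
    rw [ae_all_iff]
    exact fun h => ((hg h).2.1).and ((hg h).2.2)
  refine tendsto_of_subseq_tendsto fun ns hns => ?_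
  have htm : TendstoInMeasure μ Vh atTop V :=
    tendstoInMeasure_of_tendsto_eLpNorm hq0 (fun h => (hVh h).aestronglyMeasurable)
      hV.aestronglyMeasurable hconv
  have htm' : TendstoInMeasure μ (fun k => Vh (ns k)) atTop V := fun ε hε => (htm ε hε).comp hns
  obtain ⟨ms, hms, hae⟩ := htm'.exists_seq_tendsto_ae
  refine ⟨ms, ?_⟩
  set σ : ℕ → ℕ := fun k => ns (ms k) with hσ
  have hLpσ : Tendsto (fun k => eLpNorm (fun x => Vh (σ k) x - V x) (ENNReal.ofReal p) μ)
      atTop (𝓝 0) := hconv.comp (hns.comp hms.tendsto_atTop)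
  have hDm : ∀ k, AEStronglyMeasurable (D (σ k)) μ := fun k =>
    ((hI1 (σ k)).aestronglyMeasurable).sub ((hI2 (σ k)).aestronglyMeasurable)
  -- a.e. convergence of `D (σ k)` to zero
  have haeD : ∀ᵐ x ∂μ, Tendsto (fun k => D (σ k) x) atTop (𝓝 0) := by
    filter_upwards [hae, hnice] with x hx hnx
    have hb : ∀ k, ‖D (σ k) x‖ ≤ ‖Vh (σ k) x - V x‖ *
        (c1 * (‖V x‖ + ‖Vh (σ k) x‖ + 1) ^ p + a0 x + a1 x) := by
      intro k
      rcases hnx (σ k) with ⟨hcx, hgr⟩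
      have hub : ∀ ξ : Vec m, g (σ k) x ξ ≤ c1 * ‖ξ‖ ^ p + a1 x := fun ξ => (hgr ξ).2
      have hlb : ∀ ξ : Vec m, -(a0 x) ≤ g (σ k) x ξ := fun ξ => by
        have h1 := (hgr ξ).1
        nlinarith [mul_nonneg h0.le (Real.rpow_nonneg (norm_nonneg ξ) p)]
      simpa [Real.norm_eq_abs] using
        aux_convex_abs_sub hcx hp0.le hc1 hub hlb (V x) (Vh (σ k) x)
    refine squeeze_zero_norm hb ?_
    have h1 : Tendsto (fun k => ‖Vh (σ k) x - V x‖) atTop (𝓝 0) := by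
      have h2 : Tendsto (fun k => Vh (σ k) x - V x) atTop (𝓝 0) := by
        simpa using hx.sub (tendsto_const_nhds (x := V x))
      simpa using h2.norm
    have h2 : Tendsto (fun k => c1 * (‖V x‖ + ‖Vh (σ k) x‖ + 1) ^ p + a0 x + a1 x) atTop
        (𝓝 (c1 * (‖V x‖ + ‖V x‖ + 1) ^ p + a0 x + a1 x)) := by
      have hbt : Tendsto (fun k => ‖V x‖ + ‖Vh (σ k) x‖ + 1) atTop
          (𝓝 (‖V x‖ + ‖V x‖ + 1)) := by
        exact (tendsto_const_nhds.add hx.norm).add_const 1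
      have hct : ContinuousAt (fun y : ℝ => y ^ p) (‖V x‖ + ‖V x‖ + 1) :=
        Real.continuousAt_rpow_const _ _ (Or.inr hp0.le)
      exact (((hct.tendsto.comp hbt).const_mul c1).add_const (a0 x)).add_const (a1 x)
    simpa using h1.mul h2
  -- uniform integrability of `D (σ k)`
  set A : ℕ → Pt n → ℝ := fun k x => (c1 * 2 ^ p) * ‖Vh (σ k) x - V x‖ ^ p with hA
  have hAint : ∀ k, Integrable (A k) μ := by
    intro k
    have h1 := ((hVh (σ k)).sub hV).integrable_norm_rpow hq0 hqt
    rw [hqr] at h1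
    exact h1.const_mul _
  have hAten : Tendsto (fun k => eLpNorm (A k) 1 μ) atTop (𝓝 0) := by
    have hAe : ∀ k, eLpNorm (A k) 1 μ = ENNReal.ofReal (c1 * 2 ^ p) *
        (eLpNorm (fun x => Vh (σ k) x - V x) (ENNReal.ofReal p) μ) ^ p := fun k =>
      aux_eLpNorm_one_mul_rpow _ (by positivity) hp0
    simp_rw [hAe]
    have h1 : Tendsto (fun k =>
        (eLpNorm (fun x => Vh (σ k) x - V x) (ENNReal.ofReal p) μ) ^ p) atTop (𝓝 0) := by
      have := hLpσ.ennrpow_const p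
      rwa [ENNReal.zero_rpow_of_pos hp0] at this
    have h2 := ENNReal.Tendsto.const_mul (a := ENNReal.ofReal (c1 * 2 ^ p)) h1 (Or.inr ENNReal.ofReal_ne_top)
    simpa using h2
  set onef : Pt n → ℝ := fun x => (c1 * 2 ^ p + c1) * ‖V x‖ ^ p + (2 * a0 x + 2 * a1 x)
    with honef
  have honeInt : Integrable onef μ := by
    have h1 := hV.integrable_norm_rpow hq0 hqt
    rw [hqr] at h1
    exact (h1.const_mul _).add ((ha0I.const_mul 2).add (ha1I.const_mul 2))
  have hAu : UnifIntegrable A 1 μ :=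
    unifIntegrable_of_tendsto_Lp_zero le_rfl ENNReal.one_ne_top
      (fun k => memLp_one_iff_integrable.mpr (hAint k)) hAten
  have hBu : UnifIntegrable (A + fun _ => onef) 1 μ :=
    hAu.add (unifIntegrable_const le_rfl ENNReal.one_ne_top
        (memLp_one_iff_integrable.mpr honeInt))
      le_rfl (fun k => (hAint k).aestronglyMeasurable)
      (fun _ => honeInt.aestronglyMeasurable)
  have hdom : ∀ k, ∀ᵐ x ∂μ, ‖D (σ k) x‖ ≤ ‖A k x + onef x‖ := by
    intro k
    filter_upwards [hnice] with x hx
    rcases hx (σ k) with ⟨-, hgr⟩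
    have habs : ∀ ξ : Vec m, |g (σ k) x ξ| ≤ c1 * ‖ξ‖ ^ p + a0 x + a1 x := by
      intro ξ
      rcases hgr ξ with ⟨hl, hu⟩
      rw [abs_le]
      have h1 : (0:ℝ) ≤ c0 * ‖ξ‖ ^ p := mul_nonneg h0.le (Real.rpow_nonneg (norm_nonneg _) p)
      have h2 : (0:ℝ) ≤ c1 * ‖ξ‖ ^ p := mul_nonneg hc1 (Real.rpow_nonneg (norm_nonneg _) p)
      constructor <;> nlinarith [ha0 x, ha1 x]
    have h3 : ‖Vh (σ k) x‖ ^ p ≤ 2 ^ p * (‖Vh (σ k) x - V x‖ ^ p + ‖V x‖ ^ p) := by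
      have h4 : ‖Vh (σ k) x‖ ≤ ‖Vh (σ k) x - V x‖ + ‖V x‖ := by
        calc ‖Vh (σ k) x‖ = ‖(Vh (σ k) x - V x) + V x‖ := by rw [sub_add_cancel]
          _ ≤ _ := norm_add_le _ _
      calc ‖Vh (σ k) x‖ ^ p ≤ (‖Vh (σ k) x - V x‖ + ‖V x‖) ^ p :=
            Real.rpow_le_rpow (norm_nonneg _) h4 hp0.le
        _ ≤ 2 ^ p * (‖Vh (σ k) x - V x‖ ^ p + ‖V x‖ ^ p) :=
            aux_two_rpow (norm_nonneg _) (norm_nonneg _) hp0.le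
    have hDb : |D (σ k) x| ≤ A k x + onef x := by
      have e1 := habs (Vh (σ k) x)
      have e2 := habs (V x)
      have e3 : |D (σ k) x| ≤ |g (σ k) x (Vh (σ k) x)| + |g (σ k) x (V x)| := abs_sub _ _
      simp only [hD, hA, honef]
      nlinarith [ha0 x, ha1 x]
    calc ‖D (σ k) x‖ = |D (σ k) x| := Real.norm_eq_abs _
      _ ≤ A k x + onef x := hDb
      _ ≤ |A k x + onef x| := le_abs_self _
      _ = ‖A k x + onef x‖ := (Real.norm_eq_abs _).symm
  have hDu : UnifIntegrable (fun k => D (σ k)) 1 μ := by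
    intro ε hε
    obtain ⟨δ, hδ, hB⟩ := hBu hε
    refine ⟨δ, hδ, fun i s hs hμs => ?_⟩
    refine le_trans (eLpNorm_mono_ae ?_) (hB i s hs hμs)
    filter_upwards [hdom i] with x hx
    by_cases hxs : x ∈ s
    · simpa [Set.indicator_of_mem hxs] using hx
    · simp [Set.indicator_of_notMem hxs]
  -- Vitali convergence
  have hVit : Tendsto (fun k => eLpNorm ((fun k => D (σ k)) k - (0 : Pt n → ℝ)) 1 μ)
      atTop (𝓝 0) :=
    tendsto_Lp_finite_of_tendsto_ae le_rfl ENNReal.one_ne_top hDm MemLp.zero hDu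
      (by simpa using haeD)
  have hfin := tendsto_integral_of_L1' (μ := μ) (0 : Pt n → ℝ) (integrable_zero _ _ _).aestronglyMeasurable
    (Eventually.of_forall fun k => (hI1 (σ k)).sub (hI2 (σ k)))
    (by exact hVit)
  simpa using hfin


lemma aux_integral_bound {μ : Measure (Pt n)} {f : Pt n → Vec m → ℝ}
    {W : Pt n → Vec m} {p c0 c1 : ℝ} {a0 a1 : Pt n → ℝ}
    (hp : 0 < p) (hc1 : 0 ≤ c1)
    (ha0 : ∀ x, 0 ≤ a0 x) (ha1 : ∀ x, 0 ≤ a1 x)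
    (ha0I : Integrable a0 μ) (ha1I : Integrable a1 μ)
    (hfm : Measurable (Function.uncurry f))
    (hgrow : ∀ᵐ x ∂μ, ∀ η : Vec m,
      c0 * ‖η‖ ^ p - a0 x ≤ f x η ∧ f x η ≤ c1 * ‖η‖ ^ p + a1 x)
    (hc0 : 0 ≤ c0)
    (hW : MemLp W (ENNReal.ofReal p) μ) :
    |∫ x, f x (W x) ∂μ| ≤ ∫ x, (c1 * ‖W x‖ ^ p + (a0 x + a1 x)) ∂μ := by
  have hq0 : ENNReal.ofReal p ≠ 0 := by
    simp [ENNReal.ofReal_eq_zero, not_le, hp]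
  have hqt : ENNReal.ofReal p ≠ ∞ := ENNReal.ofReal_ne_top
  have hqr : (ENNReal.ofReal p).toReal = p := ENNReal.toReal_ofReal hp.le
  have hWp : Integrable (fun x => ‖W x‖ ^ p) μ := by
    have h1 := hW.integrable_norm_rpow hq0 hqt
    rwa [hqr] at h1
  rw [← Real.norm_eq_abs]
  refine norm_integral_le_of_norm_le ((hWp.const_mul c1).add (ha0I.add ha1I)) ?_
  filter_upwards [hgrow] with x hx
  rcases hx (W x) with ⟨hl, hu⟩
  rw [Real.norm_eq_abs, abs_le]
  have h1 : (0:ℝ) ≤ c0 * ‖W x‖ ^ p :=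
    mul_nonneg hc0 (Real.rpow_nonneg (norm_nonneg _) p)
  have h2 : (0:ℝ) ≤ c1 * ‖W x‖ ^ p :=
    mul_nonneg hc1 (Real.rpow_nonneg (norm_nonneg _) p)
  constructor <;> nlinarith [ha0 x, ha1 x]


/-- Theorem 3.4: pointwise convergence ⇔ Γ-convergence in the strong
topology of `W^{1,p}_X(Ω)`. -/
theorem statement_9
    {n m : ℕ} (c : Fin m → Fin n → Pt n → ℝ) (hc : LocLipCoeff c)
    (Ω : Set (Pt n)) (hΩo : IsOpen Ω) (hΩb : Bornology.IsBounded Ω)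
    (p : ℝ) (hp : 1 < p) (hLIC : LIC c Ω)
    (c0 c1 : ℝ) (h0 : 0 < c0) (h01 : c0 ≤ c1)
    (a0 a1 : Pt n → ℝ) (ha0 : ∀ x, 0 ≤ a0 x) (ha1 : ∀ x, 0 ≤ a1 x)
    (ha0I : IntegrableOn a0 Ω) (ha1I : IntegrableOn a1 Ω)
    (fh : ℕ → Pt n → Vec m → ℝ) (f : Pt n → Vec m → ℝ)
    (hfh : ∀ h, MemI Ω p c0 c1 a0 a1 (fh h)) (hf : MemI Ω p c0 c1 a0 a1 f) :
    -- pointwise convergence of (F_h) to F on W^{1,p}_X(Ω) ...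
    (∀ (u : Pt n → ℝ) (U : Pt n → Vec m), MemW1pX c Ω p u U →
      Tendsto (fun h => ∫ x in Ω, fh h x (U x)) atTop (nhds (∫ x in Ω, f x (U x))))
    ↔
    -- ... iff Γ-convergence in the strong topology of W^{1,p}_X(Ω)
    (∀ (u : Pt n → ℝ) (U : Pt n → Vec m), MemW1pX c Ω p u U →
      (∀ (uh : ℕ → Pt n → ℝ) (Uh : ℕ → Pt n → Vec m),
        (∀ h, MemW1pX c Ω p (uh h) (Uh h)) →
        TendstoLp p (volume.restrict Ω) uh u →
        TendstoLp p (volume.restrict Ω) Uh U →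
        (∫ x in Ω, f x (U x)) ≤ liminf (fun h => ∫ x in Ω, fh h x (Uh h x)) atTop) ∧
      (∃ (uh : ℕ → Pt n → ℝ) (Uh : ℕ → Pt n → Vec m),
        (∀ h, MemW1pX c Ω p (uh h) (Uh h)) ∧
        TendstoLp p (volume.restrict Ω) uh u ∧
        TendstoLp p (volume.restrict Ω) Uh U ∧
        limsup (fun h => ∫ x in Ω, fh h x (Uh h x)) atTop ≤ (∫ x in Ω, f x (U x)))) := by
  have hc1 : (0:ℝ) ≤ c1 := le_trans h0.le h01
  have hp0 : (0:ℝ) < p := lt_trans one_pos hp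
  have hconstR : ∀ w : Pt n → ℝ, TendstoLp p (volume.restrict Ω) (fun _ : ℕ => w) w := by
    intro w
    simpa [TendstoLp, sub_self] using
      (tendsto_const_nhds : Tendsto (fun _ : ℕ => (0:ℝ≥0∞)) atTop (𝓝 0))
  have hconstV : ∀ w : Pt n → Vec m, TendstoLp p (volume.restrict Ω) (fun _ : ℕ => w) w := by
    intro w
    simpa [TendstoLp, sub_self] using
      (tendsto_const_nhds : Tendsto (fun _ : ℕ => (0:ℝ≥0∞)) atTop (𝓝 0))
  constructor
  · -- pointwise convergence implies Γ-convergence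
    intro P u U hU
    have hPU := P u U hU
    constructor
    · intro uh Uh hmem hu' hU'
      have hU'' : Tendsto (fun h => eLpNorm (fun x => Uh h x - U x) (ENNReal.ofReal p)
          (volume.restrict Ω)) atTop (𝓝 0) := hU'
      have hKL := aux_key hΩb hp h0 ha0 ha1 ha0I ha1I hc1 hfh hU.2.1
        (fun h => (hmem h).2.1) hU''
      have hTend : Tendsto (fun h => ∫ x in Ω, fh h x (Uh h x)) atTop
          (𝓝 (∫ x in Ω, f x (U x))) := by
        have h2 := hKL.add hPU
        simpa using h2
      exact hTend.liminf_eq.ge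
    · exact ⟨fun _ => u, fun _ => U, fun _ => hU, hconstR u, hconstV U,
        le_of_eq hPU.limsup_eq⟩
  · -- Γ-convergence implies pointwise convergence
    intro G u U hU
    obtain ⟨hlim, uh, Uh, hmem, hu', hU', hlimsupb⟩ := G u U hU
    set FU : ℝ := ∫ x in Ω, f x (U x) with hFU
    set ah : ℕ → ℝ := fun h => ∫ x in Ω, fh h x (U x) with hah
    set bh : ℕ → ℝ := fun h => ∫ x in Ω, fh h x (Uh h x) with hbh
    have hliminf : FU ≤ liminf ah atTop :=
      hlim (fun _ => u) (fun _ => U) (fun _ => hU) (hconstR u) (hconstV U)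
    have hU'' : Tendsto (fun h => eLpNorm (fun x => Uh h x - U x) (ENNReal.ofReal p)
        (volume.restrict Ω)) atTop (𝓝 0) := hU'
    have hd : Tendsto (fun h => bh h - ah h) atTop (𝓝 0) :=
      aux_key hΩb hp h0 ha0 ha1 ha0I ha1I hc1 hfh hU.2.1 (fun h => (hmem h).2.1) hU''
    have hK : ∀ h, |ah h| ≤ ∫ x in Ω, (c1 * ‖U x‖ ^ p + (a0 x + a1 x)) := fun h =>
      aux_integral_bound hp0 hc1 ha0 ha1 ha0I ha1I (hfh h).1 (hfh h).2.2 h0.le hU.2.1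
    set K : ℝ := ∫ x in Ω, (c1 * ‖U x‖ ^ p + (a0 x + a1 x)) with hKdef
    have hBle : IsBoundedUnder (· ≤ ·) atTop ah :=
      isBoundedUnder_of ⟨K, fun h => (abs_le.mp (hK h)).2⟩
    have hBge : IsBoundedUnder (· ≥ ·) atTop ah :=
      isBoundedUnder_of ⟨-K, fun h => (abs_le.mp (hK h)).1⟩
    have hdev1 : ∀ᶠ h in atTop, |bh h - ah h| < 1 := by
      have h1 := Metric.tendsto_nhds.mp hd 1 one_pos
      simpa [Real.dist_eq] using h1
    have hbBle : IsBoundedUnder (· ≤ ·) atTop bh := by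
      refine isBoundedUnder_of_eventually_le (a := K + 1) ?_
      filter_upwards [hdev1] with h hh
      have h2 := (abs_le.mp (hK h)).2
      have h3 := (abs_lt.mp hh).2
      linarith
    have hlimsupa : limsup ah atTop ≤ FU := by
      refine le_of_forall_pos_le_add fun ε hε => ?_
      have h1 : ∀ᶠ h in atTop, bh h < FU + ε / 2 :=
        eventually_lt_of_limsup_lt (lt_of_le_of_lt hlimsupb (by linarith)) hbBle
      have h2 : ∀ᶠ h in atTop, |bh h - ah h| < ε / 2 := by
        have h3 := Metric.tendsto_nhds.mp hd (ε / 2) (by linarith)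
        simpa [Real.dist_eq] using h3
      refine limsup_le_of_le hBge.isCoboundedUnder_le ?_
      filter_upwards [h1, h2] with h hh1 hh2
      have h4 := (abs_lt.mp hh2).1
      linarith
    exact tendsto_of_le_liminf_of_limsup_le hliminf hlimsupa hBle hBge


end
end
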